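/- Let μ : ℂ → ℂ be analytic near 0 with μ(λ) = -λ/a + λ²β/a³ + O(λ³), where a > 0 and β > 0. Then there exist r, M, c > 0 such that for all real λ with 0 < λ ≤ r and all x ≥ 0: Re(λt + μ(λ)x) ≤ λ(t - x/a) + 2λ²βx/a³ for x/t bounded, and minimizing over λ ∈ [0,r] yields e^{λt + Re μ(λ)x} ≤ e^{-(x-at)²/(Mt)} when 0 ≤ (x-at)/t is sufficiently small, by choosing λ = λ_min proportional to (at - x)/t. -/

import Mathlib

/-!
Up to an `O(λ³)` error, `Re μ(λ) ≤ -λ/a + λ²β/a³` for small real `λ ≥ 0`, and the error is absorbed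
by doubling the quadratic term once `λ ≤ β/(C a³)`. Writing `d = x - at ∈ [0, at]`, the exponent
`λ(t - x/a) + 2λ²βx/a³` is then at most `-λd/a + 4λ²βt/a²`, a quadratic in `λ` minimised at
`λ = ad/(8βt)` with value `-d²/(16βt)`; the upper bound on `d/t` keeps this `λ` below `r`.
-/

open Asymptotics Topology

theorem exists_forall_re_le_re_add_mul_pow {f g : ℂ → ℂ} {n : ℕ}
    (h : (fun z => f z - g z) =O[𝓝 0] fun z => ‖z‖ ^ n) :
    ∃ δ > 0, ∃ C > 0, ∀ l : ℝ, 0 ≤ l → l < δ → (f l).re ≤ (g l).re + C * l ^ n := by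
  obtain ⟨C, hC, hCb⟩ := h.exists_pos
  obtain ⟨δ, hδ, hball⟩ := Metric.eventually_nhds_iff_ball.mp (isBigOWith_iff.mp hCb)
  refine ⟨δ, hδ, C, hC, fun l hl hlδ => ?_⟩
  have hnorm : ‖f l - g l‖ ≤ C * l ^ n := by
    simpa [abs_of_nonneg hl] using hball l (by simpa [abs_of_nonneg hl] using hlδ)
  calc (f l).re = (f l - g l).re + (g l).re := by simp
    _ ≤ C * l ^ n + (g l).re := by gcongr; exact (Complex.re_le_norm _).trans hnorm
    _ = (g l).re + C * l ^ n := add_comm _ _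

theorem exists_forall_exponent_le {a β : ℝ} {μ : ℂ → ℂ} (ha : 0 < a) (hβ : 0 < β)
    (hμ : (fun l : ℂ => μ l - (-l / (a : ℂ) + l ^ 2 * (β : ℂ) / (a : ℂ) ^ 3))
      =O[𝓝 0] fun l : ℂ => ‖l‖ ^ 3) :
    ∃ r > 0, ∀ l : ℝ, 0 ≤ l → l ≤ r → ∀ x t : ℝ, 0 ≤ x →
      l * t + (μ l).re * x ≤ l * (t - x / a) + 2 * l ^ 2 * β * x / a ^ 3 := by
  obtain ⟨δ, hδ, C, hC, hre⟩ := exists_forall_re_le_re_add_mul_pow hμ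
  refine ⟨min (δ / 2) (β / (C * a ^ 3)), by positivity, fun l hl hlr x t hx => ?_⟩
  have hlδ : l < δ := by linarith [hlr.trans (min_le_left _ _)]
  have hlC : l * (C * a ^ 3) ≤ β := (le_div_iff₀ (by positivity)).mp (hlr.trans (min_le_right _ _))
  have hmodel : (-(l : ℂ) / a + (l : ℂ) ^ 2 * β / a ^ 3).re = -l / a + l ^ 2 * β / a ^ 3 := by
    rw [← Complex.ofReal_re (-l / a + l ^ 2 * β / a ^ 3)]
    push_cast
    rfl
  have hcube : C * l ^ 3 ≤ l ^ 2 * β / a ^ 3 := by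
    rw [le_div_iff₀ (by positivity)]
    nlinarith [mul_le_mul_of_nonneg_left hlC (sq_nonneg l)]
  have hμl : (μ l).re ≤ -l / a + 2 * l ^ 2 * β / a ^ 3 := by
    have := hre l hl hlδ
    rw [hmodel] at this
    linarith [show 2 * l ^ 2 * β / a ^ 3 = l ^ 2 * β / a ^ 3 + l ^ 2 * β / a ^ 3 by ring]
  calc l * t + (μ l).re * x ≤ l * t + (-l / a + 2 * l ^ 2 * β / a ^ 3) * x := by gcongr
    _ = l * (t - x / a) + 2 * l ^ 2 * β * x / a ^ 3 := by ring

theorem optimal_exponent_le_neg_sq_div {a β x t : ℝ} (ha : 0 < a) (hβ : 0 < β) (ht : 0 < t)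
    (hda : x - a * t ≤ a * t) :
    a * (x - a * t) / (8 * β * t) * (t - x / a)
        + 2 * (a * (x - a * t) / (8 * β * t)) ^ 2 * β * x / a ^ 3
      ≤ -(x - a * t) ^ 2 / (16 * β * t) := by
  have hdiff : a * (x - a * t) / (8 * β * t) * (t - x / a)
        + 2 * (a * (x - a * t) / (8 * β * t)) ^ 2 * β * x / a ^ 3
        - -(x - a * t) ^ 2 / (16 * β * t)
      = (x - a * t) ^ 2 * (x - 2 * a * t) / (32 * β * t ^ 2 * a) := by
    field_simp
    ring
  have : (x - a * t) ^ 2 * (x - 2 * a * t) / (32 * β * t ^ 2 * a) ≤ 0 :=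
    div_nonpos_of_nonpos_of_nonneg
      (mul_nonpos_of_nonneg_of_nonpos (sq_nonneg _) (by linarith)) (by positivity)
  linarith

theorem stmt11_general (a β : ℝ) (ha : 0 < a) (hβ : 0 < β) (μ : ℂ → ℂ)
    (hμ : (fun l : ℂ => μ l - (-l / (a : ℂ) + l ^ 2 * (β : ℂ) / (a : ℂ) ^ 3))
      =O[nhds 0] fun l : ℂ => ‖l‖ ^ 3) :
    ∃ r > 0, ∃ M > 0, ∃ c > 0,
      (∀ l : ℝ, 0 < l → l ≤ r → ∀ x t : ℝ, 0 ≤ x → 0 < t → x ≤ c * t →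
        ((l : ℂ) * (t : ℂ) + μ (l : ℂ) * (x : ℂ)).re
          ≤ l * (t - x / a) + 2 * l ^ 2 * β * x / a ^ 3) ∧
      (∀ x t : ℝ, 0 < t → 0 ≤ (x - a * t) / t → (x - a * t) / t ≤ c →
        ∃ l : ℝ, 0 ≤ l ∧ l ≤ r ∧
          Real.exp (l * t + (μ (l : ℂ)).re * x)
            ≤ Real.exp (-(x - a * t) ^ 2 / (M * t))) := by
  obtain ⟨r, hr, hexp⟩ := exists_forall_exponent_le ha hβ hμ
  refine ⟨r, hr, 16 * β, by positivity, min a (8 * β * r / a), by positivity, ?_, ?_⟩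
  · intro l hl hlr x t hx _ _
    simpa using hexp l hl.le hlr x t hx
  · intro x t ht hs hsc
    have hd : 0 ≤ x - a * t := by simpa using (le_div_iff₀ ht).mp hs
    have hda : x - a * t ≤ a * t := (div_le_iff₀ ht).mp (hsc.trans (min_le_left _ _))
    have hdr : x - a * t ≤ 8 * β * r / a * t := (div_le_iff₀ ht).mp (hsc.trans (min_le_right _ _))
    have hl : 0 ≤ a * (x - a * t) / (8 * β * t) := div_nonneg (mul_nonneg ha.le hd) (by positivity)
    have hlr : a * (x - a * t) / (8 * β * t) ≤ r := by
      rw [div_le_iff₀ (by positivity)]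
      calc a * (x - a * t) ≤ a * (8 * β * r / a * t) := by gcongr
        _ = r * (8 * β * t) := by field_simp
    refine ⟨_, hl, hlr, Real.exp_le_exp.mpr ?_⟩
    exact (hexp _ hl hlr x t (by linarith)).trans (optimal_exponent_le_neg_sq_div ha hβ ht hda)

/-- Scalar optimization in the low-frequency stationary-phase argument: for
`μ(λ) = -λ/a + λ²β/a³ + O(λ³)` analytic near `0`, the exponent `Re(λt + μ(λ)x)` admits
the expansion bound, and optimizing over small real `λ` (proportional to `(at-x)/t`)
converts `e^{λt + Re μ(λ)x}` into a moving-Gaussian bound `e^{-(x-at)²/(Mt)}`. -/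
theorem stmt11 (a β : ℝ) (ha : 0 < a) (hβ : 0 < β) (μ : ℂ → ℂ)
    (hμa : AnalyticAt ℂ μ 0)
    (hμ : (fun l : ℂ => μ l - (-l / (a : ℂ) + l ^ 2 * (β : ℂ) / (a : ℂ) ^ 3))
      =O[nhds 0] fun l : ℂ => ‖l‖ ^ 3) :
    ∃ r > 0, ∃ M > 0, ∃ c > 0,
      (∀ l : ℝ, 0 < l → l ≤ r → ∀ x t : ℝ, 0 ≤ x → 0 < t → x ≤ c * t →
        ((l : ℂ) * (t : ℂ) + μ (l : ℂ) * (x : ℂ)).re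
          ≤ l * (t - x / a) + 2 * l ^ 2 * β * x / a ^ 3) ∧
      (∀ x t : ℝ, 0 < t → 0 ≤ (x - a * t) / t → (x - a * t) / t ≤ c →
        ∃ l : ℝ, 0 ≤ l ∧ l ≤ r ∧
          Real.exp (l * t + (μ (l : ℂ)).re * x)
            ≤ Real.exp (-(x - a * t) ^ 2 / (M * t))) :=
  stmt11_general a β ha hβ μ hμ
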